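/- In the setting of one two-level iteration with ideal transfer operators, exact coarse solve, and sSIMPLE pre-smoothing, if the approximate-Schur-complement residual satisfies ‖r_S̃‖₁ = ‖b_F − A_FC·D_CC⁻¹·b_C − S̃_C·q‖₁ < ε for some ε > 0, then the residual of the original system after one iteration satisfies ‖r‖₁ ≤ C·ε with C = 1 + ‖A_CF·A_FF⁻¹‖, where ‖A_CF·A_FF⁻¹‖ is the operator norm induced by ℓ¹ vector norms and the ℓ¹ norm of a block vector over C ⊕ F is the sum of the ℓ¹ norms of its blocks. -/

import Mathlib

open Matrix

/-- The ℓ¹ norm of a vector. -/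
noncomputable def l1Norm {ι : Type*} [Fintype ι] (v : ι → ℝ) : ℝ := ∑ i, |v i|

/-- The operator norm of a matrix induced by the ℓ¹ vector norms. -/
noncomputable def l1OpNorm {ι κ : Type*} [Fintype ι] [Fintype κ] (M : Matrix ι κ ℝ) : ℝ :=
  sSup ((fun v => l1Norm (M.mulVec v)) '' {v : κ → ℝ | l1Norm v ≤ 1})

lemma l1Norm_nonneg {ι : Type*} [Fintype ι] (v : ι → ℝ) : 0 ≤ l1Norm v :=
  Finset.sum_nonneg fun _ _ => abs_nonneg _

lemma l1Norm_smul {ι : Type*} [Fintype ι] (c : ℝ) (v : ι → ℝ) :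
    l1Norm (c • v) = |c| * l1Norm v := by
  simp [l1Norm, Finset.mul_sum, abs_mul]

lemma l1Norm_mulVec_le_sum {ι κ : Type*} [Fintype ι] [Fintype κ] (M : Matrix ι κ ℝ)
    (v : κ → ℝ) : l1Norm (M.mulVec v) ≤ (∑ j, ∑ i, |M i j|) * l1Norm v := by
  classical
  have h1 : l1Norm (M.mulVec v) ≤ ∑ i, ∑ j, |M i j| * |v j| := by
    refine Finset.sum_le_sum fun i _ => ?_
    calc |M.mulVec v i| = |∑ j, M i j * v j| := by simp [Matrix.mulVec, dotProduct]
      _ ≤ ∑ j, |M i j * v j| := Finset.abs_sum_le_sum_abs _ _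
      _ = ∑ j, |M i j| * |v j| := by simp [abs_mul]
  rw [Finset.sum_comm] at h1
  refine h1.trans ?_
  rw [l1Norm, Finset.mul_sum]
  refine Finset.sum_le_sum fun j _ => ?_
  rw [← Finset.sum_mul]
  exact mul_le_mul_of_nonneg_right
    (Finset.single_le_sum (f := fun j' => ∑ i, |M i j'|)
      (fun j' _ => Finset.sum_nonneg fun i _ => abs_nonneg _) (Finset.mem_univ j))
    (abs_nonneg _)

lemma l1OpNorm_bdd {ι κ : Type*} [Fintype ι] [Fintype κ] (M : Matrix ι κ ℝ) :
    BddAbove ((fun v => l1Norm (M.mulVec v)) '' {v : κ → ℝ | l1Norm v ≤ 1}) := by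
  refine ⟨∑ j, ∑ i, |M i j|, ?_⟩
  rintro x ⟨v, hv, rfl⟩
  have h := l1Norm_mulVec_le_sum M v
  have hK : (0:ℝ) ≤ ∑ j, ∑ i, |M i j| :=
    Finset.sum_nonneg fun _ _ => Finset.sum_nonneg fun _ _ => abs_nonneg _
  have hv' : l1Norm v ≤ 1 := hv
  nlinarith [l1Norm_nonneg v]

lemma l1OpNorm_nonneg {ι κ : Type*} [Fintype ι] [Fintype κ] (M : Matrix ι κ ℝ) :
    0 ≤ l1OpNorm M := by
  have : (0:ℝ) ∈ (fun v => l1Norm (M.mulVec v)) '' {v : κ → ℝ | l1Norm v ≤ 1} := by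
    refine ⟨0, by simp [l1Norm], by simp [l1Norm]⟩
  exact le_csSup (l1OpNorm_bdd M) this

lemma l1Norm_mulVec_le {ι κ : Type*} [Fintype ι] [Fintype κ] (M : Matrix ι κ ℝ) (v : κ → ℝ) :
    l1Norm (M.mulVec v) ≤ l1OpNorm M * l1Norm v := by
  rcases eq_or_lt_of_le (l1Norm_nonneg v) with h | h
  · have hv : v = 0 := by
      funext j
      have h0 := (Finset.sum_eq_zero_iff_of_nonneg
        (fun i _ => abs_nonneg (v i))).mp h.symm j (Finset.mem_univ j)
      simpa using abs_eq_zero.mp h0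
    simp [hv, l1Norm]
  · set c := l1Norm v with hc
    have hmem : c⁻¹ • v ∈ {v : κ → ℝ | l1Norm v ≤ 1} := by
      simp only [Set.mem_setOf_eq, l1Norm_smul, abs_of_pos (inv_pos.mpr h), ← hc]
      rw [inv_mul_cancel₀ h.ne']
    have hle : l1Norm (M.mulVec (c⁻¹ • v)) ≤ l1OpNorm M :=
      le_csSup (l1OpNorm_bdd M) ⟨_, hmem, rfl⟩
    rw [Matrix.mulVec_smul, l1Norm_smul, abs_of_pos (inv_pos.mpr h)] at hle
    calc l1Norm (M.mulVec v) = c * (c⁻¹ * l1Norm (M.mulVec v)) := by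
          field_simp
      _ ≤ c * l1OpNorm M := by nlinarith
      _ = l1OpNorm M * c := mul_comm _ _

lemma sum_elim_sub {α β γ : Type*} [Sub γ] (f : α → γ) (g : β → γ) (h : α → γ) (k : β → γ) :
    Sum.elim f g - Sum.elim h k = Sum.elim (f - h) (g - k) := by
  funext i; cases i <;> rfl

/-- If the approximate-Schur residual of the sSIMPLE smoothing step satisfies
`‖r_S̃‖₁ < ε`, then one two-level iteration with ideal transfer operators and exact
coarse solve yields `‖r‖₁ ≤ (1 + ‖A_CF·A_FF⁻¹‖)·ε`. -/
theorem residual_bound_sSIMPLE_smoothing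
    {C F : Type*} [Fintype C] [Fintype F] [DecidableEq C] [DecidableEq F]
    (A_CC : Matrix C C ℝ) (A_CF : Matrix C F ℝ) (A_FC : Matrix F C ℝ) (A_FF : Matrix F F ℝ)
    (hFF : IsUnit A_FF.det)
    (hS : IsUnit (A_CC - A_CF * A_FF⁻¹ * A_FC).det)
    (D_CC : Matrix C C ℝ) (hD : IsUnit D_CC.det)
    (Stilde : Matrix F F ℝ) (hSt : Stilde = A_FF - A_FC * D_CC⁻¹ * A_CF)
    (hStinv : IsUnit Stilde.det)
    (A : Matrix (C ⊕ F) (C ⊕ F) ℝ) (hA : A = fromBlocks A_CC A_CF A_FC A_FF)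
    (Phat : Matrix (C ⊕ F) C ℝ) (hP : Phat = fromRows 1 (-(A_FF⁻¹ * A_FC)))
    (Rhat : Matrix C (C ⊕ F) ℝ) (hR : Rhat = fromCols 1 (-(A_CF * A_FF⁻¹)))
    (bC : C → ℝ) (bF : F → ℝ) (q : F → ℝ)
    (b : C ⊕ F → ℝ) (hb : b = Sum.elim bC bF)
    (xs : C ⊕ F → ℝ)
    (hxs : xs = Sum.elim (D_CC⁻¹.mulVec bC - (D_CC⁻¹ * A_CF).mulVec q) q)
    (x1 : C ⊕ F → ℝ)
    (hx1 : x1 = xs + Phat.mulVec ((Rhat * A * Phat)⁻¹.mulVec (Rhat.mulVec (b - A.mulVec xs))))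
    (ε : ℝ) (hε : 0 < ε)
    (hres : l1Norm (bF - (A_FC * D_CC⁻¹).mulVec bC - Stilde.mulVec q) < ε) :
    l1Norm (b - A.mulVec x1) ≤ (1 + l1OpNorm (A_CF * A_FF⁻¹)) * ε := by
  have hinvFF : A_FF⁻¹ * A_FF = 1 := nonsing_inv_mul _ hFF
  have hFFinv : A_FF * A_FF⁻¹ = 1 := mul_nonsing_inv _ hFF
  set rS : F → ℝ := bF - (A_FC * D_CC⁻¹).mulVec bC - Stilde.mulVec q with hrS
  set xC : C → ℝ := D_CC⁻¹.mulVec bC - (D_CC⁻¹ * A_CF).mulVec q with hxC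
  set rC : C → ℝ := bC - A_CC.mulVec xC - A_CF.mulVec q with hrC
  -- residual after smoothing
  have hFcomp : bF - (A_FC.mulVec xC + A_FF.mulVec q) = rS := by
    rw [hrS, hSt, hxC]
    simp only [Matrix.mulVec_sub, Matrix.sub_mulVec, Matrix.mulVec_mulVec, Matrix.mul_assoc]
    abel
  have hrs : b - A.mulVec xs = Sum.elim rC rS := by
    rw [hb, hA, hxs, fromBlocks_mulVec]
    simp only [Sum.elim_comp_inl, Sum.elim_comp_inr]
    rw [sum_elim_sub, hFcomp, sub_add_eq_sub_sub, hrC]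
  -- coarse matrix = Schur complement
  have hRAP : Rhat * A * Phat = A_CC - A_CF * A_FF⁻¹ * A_FC := by
    rw [hR, hA, hP, fromCols_mul_fromBlocks, fromCols_mul_fromRows]
    have key : (1 : Matrix C C ℝ) * A_CF + -(A_CF * A_FF⁻¹) * A_FF = 0 := by
      rw [Matrix.one_mul, Matrix.neg_mul, Matrix.mul_assoc, hinvFF, Matrix.mul_one,
        add_neg_cancel]
    rw [key, Matrix.zero_mul, add_zero, Matrix.mul_one, Matrix.one_mul, Matrix.neg_mul,
      ← sub_eq_add_neg]
  obtain ⟨w, hw⟩ : ∃ w : C → ℝ,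
      w = (A_CC - A_CF * A_FF⁻¹ * A_FC)⁻¹.mulVec (Rhat.mulVec (Sum.elim rC rS)) := ⟨_, rfl⟩
  have hSw : (A_CC - A_CF * A_FF⁻¹ * A_FC).mulVec w = Rhat.mulVec (Sum.elim rC rS) := by
    rw [hw, Matrix.mulVec_mulVec, mul_nonsing_inv _ hS, Matrix.one_mulVec]
  have hRrs : Rhat.mulVec (Sum.elim rC rS) = rC - (A_CF * A_FF⁻¹).mulVec rS := by
    rw [hR, fromCols_mulVec_sumElim, Matrix.one_mulVec, Matrix.neg_mulVec]
    funext i; simp [sub_eq_add_neg]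
  have hAPw : A.mulVec (Phat.mulVec w) =
      Sum.elim ((A_CC - A_CF * A_FF⁻¹ * A_FC).mulVec w) 0 := by
    have hC2 : A_CC.mulVec w + A_CF.mulVec ((-(A_FF⁻¹ * A_FC)).mulVec w) =
        (A_CC - A_CF * A_FF⁻¹ * A_FC).mulVec w := by
      rw [Matrix.neg_mulVec, Matrix.mulVec_neg, Matrix.mulVec_mulVec, Matrix.sub_mulVec,
        ← sub_eq_add_neg, Matrix.mul_assoc]
    have hF2 : A_FC.mulVec w + A_FF.mulVec ((-(A_FF⁻¹ * A_FC)).mulVec w) = 0 := by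
      rw [Matrix.neg_mulVec, Matrix.mulVec_neg, Matrix.mulVec_mulVec, ← Matrix.mul_assoc,
        hFFinv, Matrix.one_mul, add_neg_cancel]
    rw [hA, hP, fromRows_mulVec, fromBlocks_mulVec]
    simp only [Sum.elim_comp_inl, Sum.elim_comp_inr, Matrix.one_mulVec]
    rw [hC2, hF2]
  have hfinal : b - A.mulVec x1 = Sum.elim ((A_CF * A_FF⁻¹).mulVec rS) rS := by
    rw [hx1, Matrix.mulVec_add, hRAP, hrs, ← hw, sub_add_eq_sub_sub, hrs, hAPw, hSw, hRrs,
      sum_elim_sub, sub_sub_cancel, sub_zero]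
  rw [hfinal]
  have hsum : l1Norm (Sum.elim ((A_CF * A_FF⁻¹).mulVec rS) rS) =
      l1Norm ((A_CF * A_FF⁻¹).mulVec rS) + l1Norm rS := by
    simp [l1Norm, Fintype.sum_sum_type]
  rw [hsum]
  have h1 := l1Norm_mulVec_le (A_CF * A_FF⁻¹) rS
  have h2 : l1Norm rS ≤ ε := le_of_lt hres
  have h3 := l1OpNorm_nonneg (A_CF * A_FF⁻¹)
  have h4 := l1Norm_nonneg rS
  nlinarith
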